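/- arXiv:2102.12021 — 2 statements merged into one kernel-verified Lean document; each statement's English description precedes it below -/
import Mathlib

section
/- Let p ∈ (0,2) and let f, g : [0,∞) → [0,∞) be non-increasing functions such that ∫_t^∞ g(s)² ds ≤ ∫_t^∞ f(s)² ds for all t ≥ 0, and suppose sup_{t>0} t^{1/p} f(t) = M < ∞. Then sup_{t>0} t^{1/p} g(t) ≤ 2^{1/p} (2-p)^{-1/p} M. -/
/-!
For `0 < a ≤ t`, monotonicity of `g` and the tail comparison give
`g(t)² (t - a) ≤ ∫_a^∞ g² ≤ ∫_a^∞ f² ≤ M² ∫_a^∞ s^(-2/p) ds = M² a^(1 - 2/p) / (2/p - 1)`.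
The choice `a = (1 - p/2) t` makes `t - a = a / (2/p - 1)`, so this reads `a^(2/p) g(t)² ≤ M²`,
that is `(1 - p/2)^(1/p) t^(1/p) g(t) ≤ M`.
-/

open MeasureTheory Set

lemma sq_mul_sub_le_setIntegral_Ioi_sq {g : ℝ → ℝ} {a t : ℝ} (hat : a ≤ t)
    (hg : AntitoneOn g (Ioc a t)) (hgt : 0 ≤ g t)
    (hint : IntegrableOn (fun s => g s ^ 2) (Ioi a)) :
    g t ^ 2 * (t - a) ≤ ∫ s in Ioi a, g s ^ 2 :=
  calc g t ^ 2 * (t - a) = ∫ _ in Ioc a t, g t ^ 2 := by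
        rw [setIntegral_const, Real.volume_real_Ioc_of_le hat, smul_eq_mul, mul_comm]
    _ ≤ ∫ s in Ioc a t, g s ^ 2 :=
        setIntegral_mono_on (integrableOn_const (by simp)) (hint.mono_set Ioc_subset_Ioi_self)
          measurableSet_Ioc fun s hs =>
            pow_le_pow_left₀ hgt (hg hs (right_mem_Ioc.2 (hs.1.trans_le hs.2)) hs.2) 2
    _ ≤ ∫ s in Ioi a, g s ^ 2 :=
        setIntegral_mono_set hint (.of_forall fun _ => sq_nonneg _)
          Ioc_subset_Ioi_self.eventuallyLE

lemma setIntegral_Ioi_le_of_le_rpow {f : ℝ → ℝ} {a q C : ℝ} (ha : 0 < a) (hq : 1 < q)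
    (hf : IntegrableOn f (Ioi a)) (hle : ∀ s ∈ Ioi a, f s ≤ C * s ^ (-q)) :
    ∫ s in Ioi a, f s ≤ C * (a ^ (1 - q) / (q - 1)) := by
  have hq' : -q < -1 := by linarith
  calc ∫ s in Ioi a, f s ≤ ∫ s in Ioi a, C * s ^ (-q) :=
        setIntegral_mono_on hf ((integrableOn_Ioi_rpow_of_lt hq' ha).const_mul C)
          measurableSet_Ioi hle
    _ = C * (a ^ (1 - q) / (q - 1)) := by
        rw [integral_const_mul, integral_Ioi_rpow_of_lt hq' ha, neg_add_eq_sub, ← neg_sub q 1,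
          neg_div_neg_eq]

lemma sq_le_mul_rpow_of_rpow_mul_le {x t q M : ℝ} (ht : 0 < t) (hx : 0 ≤ x)
    (h : t ^ q * x ≤ M) : x ^ 2 ≤ M ^ 2 * t ^ (-(2 * q)) := by
  have hx' : x = t ^ (-q) * (t ^ q * x) := by
    rw [← mul_assoc, ← Real.rpow_add ht, neg_add_cancel, Real.rpow_zero, one_mul]
  have hsq : (t ^ (-q)) ^ 2 = t ^ (-(2 * q)) := by
    rw [← Real.rpow_natCast, ← Real.rpow_mul ht.le]; push_cast; ring_nf
  rw [hx', mul_pow, hsq, mul_comm]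
  gcongr

lemma rpow_mul_sq_le_of_sq_mul_le {x a q K : ℝ} (ha : 0 < a) (hq : 1 < q)
    (h : x ^ 2 * (a / (q - 1)) ≤ K * (a ^ (1 - q) / (q - 1))) : a ^ q * x ^ 2 ≤ K := by
  have haq : 0 < a ^ q := Real.rpow_pos_of_pos ha q
  rw [Real.rpow_sub ha, Real.rpow_one, ← mul_div_assoc, ← mul_div_assoc,
    div_le_div_iff_of_pos_right (by linarith), mul_div_assoc', le_div_iff₀ haq] at h
  nlinarith

lemma rpow_mul_le_of_mul_rpow_mul_le {θ t r y M : ℝ} (hθ : 0 < θ) (ht : 0 ≤ t)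
    (h : (θ * t) ^ r * y ≤ M) : t ^ r * y ≤ θ ^ (-r) * M :=
  calc t ^ r * y = θ ^ (-r) * ((θ * t) ^ r * y) := by
        rw [Real.mul_rpow hθ.le ht, ← mul_assoc, ← mul_assoc, ← Real.rpow_add hθ, neg_add_cancel,
          Real.rpow_zero, one_mul]
    _ ≤ θ ^ (-r) * M := by gcongr

theorem stmt_0_general (p : ℝ) (hp : 0 < p) (hp2 : p < 2)
    (f g : ℝ → ℝ)
    (hg_mono : AntitoneOn g (Set.Ici 0))
    (hf_nonneg : ∀ t ∈ Set.Ici (0:ℝ), 0 ≤ f t) (hg_nonneg : ∀ t ∈ Set.Ici (0:ℝ), 0 ≤ g t)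
    (hf_int : ∀ t : ℝ, 0 ≤ t → IntegrableOn (fun s => f s ^ 2) (Set.Ioi t))
    (hg_int : ∀ t : ℝ, 0 ≤ t → IntegrableOn (fun s => g s ^ 2) (Set.Ioi t))
    (htail : ∀ t : ℝ, 0 ≤ t →
      ∫ s in Set.Ioi t, g s ^ 2 ≤ ∫ s in Set.Ioi t, f s ^ 2)
    (M : ℝ) (hM : ∀ t : ℝ, 0 < t → t ^ (1/p) * f t ≤ M) :
    ∀ t : ℝ, 0 < t → t ^ (1/p) * g t ≤ (2:ℝ) ^ (1/p) * (2 - p) ^ (-(1/p)) * M := by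
  intro t ht
  have h2p : 0 < 2 - p := by linarith
  have hθ : 0 < (2 - p) / 2 := by positivity
  have hq : 1 < 2 / p := by rw [lt_div_iff₀ hp]; linarith
  set a := (2 - p) / 2 * t with ha_def
  have ha : 0 < a := mul_pos hθ ht
  have hM0 : 0 ≤ M := (mul_nonneg (by positivity) (hf_nonneg a ha.le)).trans (hM a ha)
  have hf_sq (s : ℝ) (hs : s ∈ Ioi a) : f s ^ 2 ≤ M ^ 2 * s ^ (-(2 / p)) := by
    have hs0 : 0 < s := ha.trans hs
    simpa only [mul_one_div] using
      sq_le_mul_rpow_of_rpow_mul_le hs0 (hf_nonneg s hs0.le) (hM s hs0)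
  have hta : t - a = a / (2 / p - 1) := by
    rw [div_sub_one hp.ne', div_div_eq_mul_div, ha_def]
    field_simp
    ring
  have hchain : g t ^ 2 * (a / (2 / p - 1)) ≤ M ^ 2 * (a ^ (1 - 2 / p) / (2 / p - 1)) := by
    rw [← hta]
    calc g t ^ 2 * (t - a) ≤ ∫ s in Ioi a, g s ^ 2 :=
          sq_mul_sub_le_setIntegral_Ioi_sq (by nlinarith)
            (hg_mono.mono fun s hs => ha.le.trans hs.1.le) (hg_nonneg t ht.le) (hg_int a ha.le)
      _ ≤ ∫ s in Ioi a, f s ^ 2 := htail a ha.le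
      _ ≤ _ := setIntegral_Ioi_le_of_le_rpow ha hq (hf_int a ha.le) hf_sq
  have hkey : a ^ (1 / p) * g t ≤ M := by
    refine (le_abs_self _).trans (abs_le_of_sq_le_sq ?_ hM0)
    rw [mul_pow, ← Real.rpow_natCast, ← Real.rpow_mul ha.le]
    simpa [mul_comm, div_eq_mul_inv] using rpow_mul_sq_le_of_sq_mul_le ha hq hchain
  calc t ^ (1 / p) * g t ≤ ((2 - p) / 2) ^ (-(1 / p)) * M :=
        rpow_mul_le_of_mul_rpow_mul_le hθ ht.le hkey
    _ = 2 ^ (1 / p) * (2 - p) ^ (-(1 / p)) * M := by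
        rw [Real.div_rpow h2p.le zero_le_two, Real.rpow_neg zero_le_two, div_inv_eq_mul,
          mul_comm ((2 - p) ^ _)]

/-- If `0 < p < 2`, `f, g : [0,∞) → [0,∞)` are non-increasing, the tail integrals satisfy
`∫_t^∞ g² ≤ ∫_t^∞ f²` for all `t ≥ 0`, and `t^{1/p} f(t) ≤ M` for all `t > 0`, then
`t^{1/p} g(t) ≤ 2^{1/p} (2-p)^{-1/p} M` for all `t > 0`. -/
theorem stmt_0 (p : ℝ) (hp : 0 < p) (hp2 : p < 2)
    (f g : ℝ → ℝ)
    (hf_mono : AntitoneOn f (Set.Ici 0)) (hg_mono : AntitoneOn g (Set.Ici 0))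
    (hf_nonneg : ∀ t ∈ Set.Ici (0:ℝ), 0 ≤ f t) (hg_nonneg : ∀ t ∈ Set.Ici (0:ℝ), 0 ≤ g t)
    (hf_int : ∀ t : ℝ, 0 ≤ t → IntegrableOn (fun s => f s ^ 2) (Set.Ioi t))
    (hg_int : ∀ t : ℝ, 0 ≤ t → IntegrableOn (fun s => g s ^ 2) (Set.Ioi t))
    (htail : ∀ t : ℝ, 0 ≤ t →
      ∫ s in Set.Ioi t, g s ^ 2 ≤ ∫ s in Set.Ioi t, f s ^ 2)
    (M : ℝ) (hM : ∀ t : ℝ, 0 < t → t ^ (1/p) * f t ≤ M) :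
    ∀ t : ℝ, 0 < t → t ^ (1/p) * g t ≤ (2:ℝ) ^ (1/p) * (2 - p) ^ (-(1/p)) * M :=
  stmt_0_general p hp hp2 f g hg_mono hf_nonneg hg_nonneg hf_int hg_int htail M hM
end

section
/- Let p ∈ (0,∞), q ∈ (0,∞), and r defined by 1/r = 1/p + 1/q. If S and T are compact operators on a Hilbert space with singular values μ_j(S) ≤ A (j+1)^{−1/p} and μ_j(T) ≤ B (j+1)^{−1/q} for all j ≥ 0, then μ_j(ST) ≤ γ(p,q) A B (j+1)^{−1/r} for all j ≥ 0, where γ(p,q) = p^{−1/q} q^{−1/p} (p+q)^{1/p+1/q}. -/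
/-!
Approximation numbers are submultiplicative up to an index shift, `μ_{m+n}(ST) ≤ μ_m(S) μ_n(T)`:
if `R₁, R₂` have ranks `≤ m, n`, then `ST - (R₁T + (S - R₁)R₂) = (S - R₁)(T - R₂)` and the
subtracted operator has rank `≤ m + n`. Now split `j = m + n` with `m + 1 ≥ q(j+1)/(p+q)` and
`n + 1 ≥ p(j+1)/(p+q)`. These are the proportions minimising `x^{-1/p} y^{-1/q}` subject to
`x + y = j + 1`, and the minimum is `γ(p,q) (j+1)^{-1/r}`.
-/

/-- The `j`-th approximation number (= singular value, for compact operators) of a bounded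
operator: the distance in operator norm to operators of rank at most `j`. -/
noncomputable def approxNum {H : Type*} [NormedAddCommGroup H] [InnerProductSpace ℂ H]
    (T : H →L[ℂ] H) (j : ℕ) : ℝ :=
  sInf ((fun R : H →L[ℂ] H => ‖T - R‖) '' {R | LinearMap.rank (R : H →ₗ[ℂ] H) ≤ (j : Cardinal)})

section approxNum

variable {H : Type*} [NormedAddCommGroup H] [InnerProductSpace ℂ H]

lemma approxNum_eq_iInf (T : H →L[ℂ] H) (j : ℕ) :
    approxNum T j =
      ⨅ R : {R : H →L[ℂ] H // LinearMap.rank (R : H →ₗ[ℂ] H) ≤ (j : Cardinal)}, ‖T - R‖ :=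
  sInf_image'

instance (j : ℕ) :
    Nonempty {R : H →L[ℂ] H // LinearMap.rank (R : H →ₗ[ℂ] H) ≤ (j : Cardinal)} :=
  ⟨⟨0, by simp⟩⟩

lemma approxNum_nonneg (T : H →L[ℂ] H) (j : ℕ) : 0 ≤ approxNum T j := by
  rw [approxNum_eq_iInf]
  exact Real.iInf_nonneg fun _ => norm_nonneg _

lemma approxNum_le_norm_sub {T R : H →L[ℂ] H} {j : ℕ}
    (hR : LinearMap.rank (R : H →ₗ[ℂ] H) ≤ j) : approxNum T j ≤ ‖T - R‖ :=
  csInf_le ⟨0, by rintro _ ⟨R, -, rfl⟩; positivity⟩ ⟨R, hR, rfl⟩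

lemma LinearMap.rank_comp_add_comp_le {K V : Type*} [DivisionRing K] [AddCommGroup V]
    [Module K V] (f g h k : V →ₗ[K] V) : (f ∘ₗ g + h ∘ₗ k).rank ≤ f.rank + k.rank :=
  (rank_add_le _ _).trans
    (add_le_add (rank_comp_le_left g f) (rank_comp_le_right k h))

lemma approxNum_comp_add_le_norm_mul_norm {S T R₁ R₂ : H →L[ℂ] H} {m n : ℕ}
    (h₁ : LinearMap.rank (R₁ : H →ₗ[ℂ] H) ≤ m)
    (h₂ : LinearMap.rank (R₂ : H →ₗ[ℂ] H) ≤ n) :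
    approxNum (S ∘L T) (m + n) ≤ ‖S - R₁‖ * ‖T - R₂‖ := by
  have hfactor : S ∘L T - (R₁ ∘L T + (S - R₁) ∘L R₂) = (S - R₁) ∘L (T - R₂) := by
    ext x
    simp only [sub_apply, add_apply, ContinuousLinearMap.comp_apply, map_sub]
    abel
  calc approxNum (S ∘L T) (m + n) ≤ ‖S ∘L T - (R₁ ∘L T + (S - R₁) ∘L R₂)‖ := by
        refine approxNum_le_norm_sub ?_
        rw [ContinuousLinearMap.toLinearMap_add, ContinuousLinearMap.toLinearMap_comp,
          ContinuousLinearMap.toLinearMap_comp, Nat.cast_add]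
        exact (LinearMap.rank_comp_add_comp_le _ _ _ _).trans (add_le_add h₁ h₂)
    _ = ‖(S - R₁) ∘L (T - R₂)‖ := by rw [hfactor]
    _ ≤ ‖S - R₁‖ * ‖T - R₂‖ := ContinuousLinearMap.opNorm_comp_le _ _

lemma approxNum_comp_add_le (S T : H →L[ℂ] H) (m n : ℕ) :
    approxNum (S ∘L T) (m + n) ≤ approxNum S m * approxNum T n := by
  rw [approxNum_eq_iInf S, Real.iInf_mul_of_nonneg (approxNum_nonneg T n)]
  refine le_ciInf fun R₁ => ?_
  rw [approxNum_eq_iInf T, Real.mul_iInf_of_nonneg (norm_nonneg _)]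
  exact le_ciInf fun R₂ => approxNum_comp_add_le_norm_mul_norm R₁.2 R₂.2

end approxNum

lemma exists_add_eq_le_add_one_and_le_add_one {j : ℕ} {a b : ℝ} (ha : 0 ≤ a) (hb : 0 < b)
    (hab : a + b = j + 1) : ∃ m n : ℕ, m + n = j ∧ a ≤ m + 1 ∧ b ≤ n + 1 := by
  have hfloor : ⌊a⌋₊ ≤ j :=
    Nat.lt_succ_iff.mp ((Nat.floor_lt ha).2 (by push_cast; linarith))
  refine ⟨⌊a⌋₊, j - ⌊a⌋₊, Nat.add_sub_cancel' hfloor, (Nat.lt_floor_add_one a).le, ?_⟩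
  rw [Nat.cast_sub hfloor]
  linarith [Nat.floor_le ha]

noncomputable def weakHolderConst (p q : ℝ) : ℝ :=
  p ^ (-(1/q)) * q ^ (-(1/p)) * (p + q) ^ (1/p + 1/q)

lemma rpow_neg_mul_rpow_neg_eq_weakHolderConst {p q c : ℝ} (hp : 0 < p) (hq : 0 < q)
    (hc : 0 < c) :
    (q * c / (p + q)) ^ (-(1/p)) * (p * c / (p + q)) ^ (-(1/q)) =
      weakHolderConst p q * c ^ (-(1/p + 1/q)) := by
  have hpq : 0 < p + q := by linarith
  rw [weakHolderConst, neg_add, Real.rpow_add hc,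
    Real.div_rpow (by positivity) hpq.le, Real.div_rpow (by positivity) hpq.le,
    Real.mul_rpow hq.le hc.le, Real.mul_rpow hp.le hc.le,
    Real.rpow_add hpq, Real.rpow_neg hpq.le (1/p), Real.rpow_neg hpq.le (1/q)]
  have h₁ : (p + q) ^ (1/p) ≠ 0 := (Real.rpow_pos_of_pos hpq _).ne'
  have h₂ : (p + q) ^ (1/q) ≠ 0 := (Real.rpow_pos_of_pos hpq _).ne'
  field_simp

lemma le_weakHolderConst_mul_of_le_mul {f g h : ℕ → ℝ} {p q r A B : ℝ} (hp : 0 < p)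
    (hq : 0 < q) (hr : 1/r = 1/p + 1/q) (hf₀ : ∀ n, 0 ≤ f n) (hg₀ : ∀ n, 0 ≤ g n)
    (hfg : ∀ m n, h (m + n) ≤ f m * g n)
    (hf : ∀ j : ℕ, f j ≤ A * ((j : ℝ) + 1) ^ (-(1/p)))
    (hg : ∀ j : ℕ, g j ≤ B * ((j : ℝ) + 1) ^ (-(1/q))) (j : ℕ) :
    h j ≤ weakHolderConst p q * A * B * ((j : ℝ) + 1) ^ (-(1/r)) := by
  set c : ℝ := (j : ℝ) + 1
  have hpq : 0 < p + q := by linarith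
  obtain ⟨m, n, hmn, hm, hn⟩ := exists_add_eq_le_add_one_and_le_add_one
    (a := q * c / (p + q)) (b := p * c / (p + q)) (by positivity) (by positivity)
    (by field_simp; ring)
  have hA : 0 ≤ A := by simpa using (hf₀ 0).trans (hf 0)
  have hB : 0 ≤ B := by simpa using (hg₀ 0).trans (hg 0)
  have hfm : f m ≤ A * (q * c / (p + q)) ^ (-(1/p)) :=
    (hf m).trans <| mul_le_mul_of_nonneg_left
      (Real.rpow_le_rpow_of_nonpos (by positivity) hm (neg_nonpos.2 (by positivity))) hA
  have hgn : g n ≤ B * (p * c / (p + q)) ^ (-(1/q)) :=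
    (hg n).trans <| mul_le_mul_of_nonneg_left
      (Real.rpow_le_rpow_of_nonpos (by positivity) hn (neg_nonpos.2 (by positivity))) hB
  calc h j = h (m + n) := by rw [hmn]
    _ ≤ f m * g n := hfg m n
    _ ≤ (A * (q * c / (p + q)) ^ (-(1/p))) * (B * (p * c / (p + q)) ^ (-(1/q))) :=
        mul_le_mul hfm hgn (hg₀ n) (by positivity)
    _ = A * B * ((q * c / (p + q)) ^ (-(1/p)) * (p * c / (p + q)) ^ (-(1/q))) := by ring
    _ = weakHolderConst p q * A * B * c ^ (-(1/r)) := by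
        rw [rpow_neg_mul_rpow_neg_eq_weakHolderConst hp hq (by positivity), hr]
        ring

theorem stmt_12_general {H : Type*} [NormedAddCommGroup H] [InnerProductSpace ℂ H]
    (p q r : ℝ) (hp : 0 < p) (hq : 0 < q) (hr : 1/r = 1/p + 1/q)
    (S T : H →L[ℂ] H)
    (A B : ℝ)
    (hA : ∀ j : ℕ, approxNum S j ≤ A * ((j : ℝ) + 1) ^ (-(1/p)))
    (hB : ∀ j : ℕ, approxNum T j ≤ B * ((j : ℝ) + 1) ^ (-(1/q))) :
    ∀ j : ℕ, approxNum (S ∘L T) j ≤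
      (p ^ (-(1/q)) * q ^ (-(1/p)) * (p + q) ^ (1/p + 1/q)) * A * B *
        ((j : ℝ) + 1) ^ (-(1/r)) :=
  le_weakHolderConst_mul_of_le_mul hp hq hr (approxNum_nonneg S) (approxNum_nonneg T)
    (approxNum_comp_add_le S T) hA hB

/-- Hölder inequality for weak Schatten quasi-norms with the constant
`γ(p,q) = p^{−1/q} q^{−1/p} (p+q)^{1/p+1/q}`: if `μ_j(S) ≤ A (j+1)^{−1/p}` and
`μ_j(T) ≤ B (j+1)^{−1/q}`, then `μ_j(ST) ≤ γ(p,q) A B (j+1)^{−1/r}` with `1/r = 1/p + 1/q`. -/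
theorem stmt_12 {H : Type*} [NormedAddCommGroup H] [InnerProductSpace ℂ H] [CompleteSpace H]
    (p q r : ℝ) (hp : 0 < p) (hq : 0 < q) (hr : 1/r = 1/p + 1/q)
    (S T : H →L[ℂ] H) (hS : IsCompactOperator S) (hT : IsCompactOperator T)
    (A B : ℝ)
    (hA : ∀ j : ℕ, approxNum S j ≤ A * ((j : ℝ) + 1) ^ (-(1/p)))
    (hB : ∀ j : ℕ, approxNum T j ≤ B * ((j : ℝ) + 1) ^ (-(1/q))) :
    ∀ j : ℕ, approxNum (S ∘L T) j ≤
      (p ^ (-(1/q)) * q ^ (-(1/p)) * (p + q) ^ (1/p + 1/q)) * A * B *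
        ((j : ℝ) + 1) ^ (-(1/r)) :=
  stmt_12_general p q r hp hq hr S T A B hA hB
end
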